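/- Let p>1 and let c be a real number with 1 < c ≤ p. Let (λ_n)_{n≥1} be a positive real sequence whose sum converges, with tails Λ*_n = Σ_{k=n}^∞ λ_k, and let (x_n)_{n≥1} be a positive real sequence. Setting A*_n = (1/Λ*_n) Σ_{k=n}^∞ λ_k x_k and assuming the series on the right-hand side converges, one has Σ_{n=1}^∞ λ_n (Λ*_n)^{p−c} (A*_n)^p ≤ ( p/(c−1) ) Σ_{n=1}^∞ λ_n (Λ*_n)^{p−c} x_n (A*_n)^{p−1}. -/

import Mathlib

/-!
Write `Λ n = Λ*_n`, `T n = Σ_{k ≥ n} λ_k x_k = Λ n * A*_n` and `H n = Λ n ^ (1 - c) * T n ^ p`.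
Weighted AM–GM applied to `Λ (n+1) / Λ n` and `T (n+1) / T n` gives the one-step inequality
`(c - 1) λ_n Λ_n^(-c) T_n^p ≤ p λ_n x_n Λ_n^(1-c) T_n^(p-1) + H (n+1) - H n`,
whose left and first right-hand terms are exactly the terms of the two series.
Summing up to `N` telescopes, and the boundary term `H N` is at most `p` times the tail of the
right-hand series from `N` on: `T N ^ p` is the telescoping sum of `T k ^ p - T (k+1) ^ p`,
each at most `p T k ^ (p-1) λ_k x_k` by convexity, while `Λ ^ (1 - c)` increases with `k`.
Hence `(c - 1)` times every partial sum of the left series is at most `p` times the right series.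
-/

open Filter Finset Real Topology

theorem rpow_sub_rpow_le_mul_sub {p s t : ℝ} (hp : 1 ≤ p) (ht : 0 ≤ t) (hts : t ≤ s) :
    s ^ p - t ^ p ≤ p * s ^ (p - 1) * (s - t) := by
  rcases hts.eq_or_lt with rfl | hlt
  · simp
  have h := (convexOn_rpow hp).slope_le_of_hasDerivAt (Set.mem_Ici.2 ht)
    (Set.mem_Ici.2 (ht.trans hts)) hlt (hasDerivAt_rpow_const (Or.inr hp))
  rwa [slope_def_field, div_le_iff₀ (sub_pos.2 hlt)] at h

theorem mul_le_rpow_one_sub_mul_rpow_add {p c u v : ℝ} (hc : 1 ≤ c) (hcp : c ≤ p) (hu : 0 < u)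
    (hv : 0 ≤ v) : p * v ≤ u ^ (1 - c) * v ^ p + (c - 1) * u + (p - c) := by
  have hp : 0 < p := by linarith
  have hgeom :
      (u ^ (1 - c) * v ^ p) ^ (1 / p) * u ^ ((c - 1) / p) * (1 : ℝ) ^ ((p - c) / p) = v := by
    rw [one_rpow, mul_one, mul_rpow (by positivity) (by positivity), ← rpow_mul hu.le,
      ← rpow_mul hv, mul_one_div_cancel hp.ne', rpow_one, mul_comm (u ^ _) v, mul_assoc,
      ← rpow_add hu, show (1 - c) * (1 / p) + (c - 1) / p = 0 by ring, rpow_zero, mul_one]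
  have h := geom_mean_le_arith_mean3_weighted (by positivity : 0 ≤ 1 / p)
    (div_nonneg (sub_nonneg.2 hc) hp.le) (div_nonneg (sub_nonneg.2 hcp) hp.le)
    (by positivity : 0 ≤ u ^ (1 - c) * v ^ p) hu.le zero_le_one (by field_simp; ring)
  rw [hgeom] at h
  calc p * v ≤ p * (1 / p * (u ^ (1 - c) * v ^ p) + (c - 1) / p * u + (p - c) / p * 1) := by
        gcongr
    _ = _ := by field_simp

theorem sub_one_mul_le_add_rpow_sub_rpow {p c lam y a s : ℝ} (hc : 1 ≤ c) (hcp : c ≤ p)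
    (ha : 0 < a) (hs : 0 < s) (ha' : 0 < a - lam) (hs' : 0 < s - lam * y) :
    (c - 1) * (lam * a ^ (-c) * s ^ p) ≤ p * (lam * y * a ^ (1 - c) * s ^ (p - 1))
      + ((a - lam) ^ (1 - c) * (s - lam * y) ^ p - a ^ (1 - c) * s ^ p) := by
  have h := mul_le_rpow_one_sub_mul_rpow_add hc hcp (div_pos ha' ha) (div_pos hs' hs).le
  rw [div_rpow ha'.le ha.le, div_rpow hs'.le hs.le] at h
  have ha1 : a ^ (1 - c) = a * a ^ (-c) := by rw [sub_eq_add_neg, rpow_add ha, rpow_one]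
  have hs1 : s ^ p = s * s ^ (p - 1) := by
    rw [← rpow_one_add' hs.le (by linarith)]; ring_nf
  rw [ha1, hs1] at h ⊢
  have hA : 0 < a ^ (-c) := by positivity
  have hS : 0 < s ^ (p - 1) := by positivity
  -- after clearing denominators, the goal is `h` multiplied by `a ^ (1 - c) * s ^ p`
  generalize a ^ (-c) = A at *
  generalize s ^ (p - 1) = S at *
  generalize (a - lam) ^ (1 - c) = P at *
  generalize (s - lam * y) ^ p = Q at *
  field_simp at h
  nlinarith [h]

theorem rpow_mul_div_rpow {a t : ℝ} (ha : 0 < a) (ht : 0 ≤ t) (q r : ℝ) :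
    a ^ q * (t / a) ^ r = a ^ (q - r) * t ^ r := by
  rw [div_rpow ht ha.le, rpow_sub ha]
  field_simp

section Recurrence

variable {p c : ℝ} {L X Lam T : ℕ → ℝ}

theorem rpow_mul_rpow_le_mul_tsum_nat_add (hp : 1 ≤ p) (hc : 1 ≤ c) (hLam : ∀ m, 0 < Lam m)
    (hLam_anti : Antitone Lam) (hT : ∀ m, 0 ≤ T m) (hLX : ∀ m, 0 ≤ L m * X m)
    (hT_succ : ∀ m, T (m + 1) = T m - L m * X m) (hT0 : Tendsto T atTop (𝓝 0))
    (hG : Summable fun m => L m * X m * Lam m ^ (1 - c) * T m ^ (p - 1)) (N : ℕ) :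
    Lam N ^ (1 - c) * T N ^ p ≤
      p * ∑' k, L (k + N) * X (k + N) * Lam (k + N) ^ (1 - c) * T (k + N) ^ (p - 1) := by
  set G := fun m => L m * X m * Lam m ^ (1 - c) * T m ^ (p - 1) with hG_def
  have hT_anti : Antitone T := antitone_nat_of_succ_le fun m => by linarith [hT_succ m, hLX m]
  have hterm : ∀ m, N ≤ m → Lam N ^ (1 - c) * (T m ^ p - T (m + 1) ^ p) ≤ p * G m := by
    intro m hm
    have hTp : 0 ≤ T m ^ p - T (m + 1) ^ p :=
      sub_nonneg.2 (rpow_le_rpow (hT _) (hT_anti m.le_succ) (by linarith))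
    calc Lam N ^ (1 - c) * (T m ^ p - T (m + 1) ^ p)
        ≤ Lam m ^ (1 - c) * (T m ^ p - T (m + 1) ^ p) :=
          mul_le_mul_of_nonneg_right
            (rpow_le_rpow_of_nonpos (hLam m) (hLam_anti hm) (by linarith)) hTp
      _ ≤ Lam m ^ (1 - c) * (p * T m ^ (p - 1) * (T m - T (m + 1))) :=
          mul_le_mul_of_nonneg_left (rpow_sub_rpow_le_mul_sub hp (hT _) (hT_anti m.le_succ))
            (rpow_nonneg (hLam m).le _)
      _ = p * G m := by rw [hT_succ, hG_def]; ring
  have hpartial : ∀ K, Lam N ^ (1 - c) * (T N ^ p - T (K + N) ^ p) ≤ p * ∑' k, G (k + N) := by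
    intro K
    have hG_nonneg : ∀ m, 0 ≤ G m := fun m => by
      have := hLam m; have := hT m; have := hLX m; positivity
    calc Lam N ^ (1 - c) * (T N ^ p - T (K + N) ^ p)
        = ∑ k ∈ range K, Lam N ^ (1 - c) * (T (k + N) ^ p - T (k + N + 1) ^ p) := by
          have := sum_range_sub' (fun k => T (k + N) ^ p) K
          simp only [zero_add, Nat.add_right_comm _ 1 N] at this
          rw [← mul_sum, this]
      _ ≤ ∑ k ∈ range K, p * G (k + N) := sum_le_sum fun k _ => hterm _ (by omega)
      _ ≤ p * ∑' k, G (k + N) := by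
          rw [← mul_sum]
          gcongr
          exact ((summable_nat_add_iff N).2 hG).sum_le_tsum _ fun k _ => hG_nonneg _
  have hlim : Tendsto (fun K => Lam N ^ (1 - c) * (T N ^ p - T (K + N) ^ p)) atTop
      (𝓝 (Lam N ^ (1 - c) * (T N ^ p - 0))) := by
    have hTp := ((hT0.comp (tendsto_add_atTop_nat N)).rpow_const (p := p)
      (Or.inr (by linarith))).const_sub (T N ^ p)
    rw [zero_rpow (by linarith)] at hTp
    exact hTp.const_mul _
  simpa using le_of_tendsto' hlim hpartial

theorem sub_one_mul_sum_range_le (hc : 1 ≤ c) (hcp : c ≤ p) (hL : ∀ m, 0 < L m)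
    (hX : ∀ m, 0 < X m) (hLam : ∀ m, 0 < Lam m) (hT : ∀ m, 0 < T m)
    (hLam_succ : ∀ m, Lam (m + 1) = Lam m - L m) (hT_succ : ∀ m, T (m + 1) = T m - L m * X m)
    (hT0 : Tendsto T atTop (𝓝 0))
    (hG : Summable fun m => L m * X m * Lam m ^ (1 - c) * T m ^ (p - 1)) (N : ℕ) :
    (c - 1) * ∑ m ∈ range N, L m * Lam m ^ (-c) * T m ^ p ≤
      p * ∑' m, L m * X m * Lam m ^ (1 - c) * T m ^ (p - 1) := by
  set G := fun m => L m * X m * Lam m ^ (1 - c) * T m ^ (p - 1) with hG_def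
  set H := fun m => Lam m ^ (1 - c) * T m ^ p with hH_def
  have hstep :
      ∀ m, (c - 1) * (L m * Lam m ^ (-c) * T m ^ p) ≤ p * G m + (H (m + 1) - H m) := by
    intro m
    have h := sub_one_mul_le_add_rpow_sub_rpow (y := X m) hc hcp (hLam m) (hT m)
      (hLam_succ m ▸ hLam (m + 1)) (hT_succ m ▸ hT (m + 1))
    rwa [← hLam_succ, ← hT_succ] at h
  have hLam_anti : Antitone Lam :=
    antitone_nat_of_succ_le fun m => by linarith [hLam_succ m, hL m]
  have hH_le := rpow_mul_rpow_le_mul_tsum_nat_add (by linarith) hc hLam hLam_anti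
    (fun m => (hT m).le) (fun m => (mul_pos (hL m) (hX m)).le) hT_succ hT0 hG N
  have hH0 : 0 ≤ H 0 := by have := hLam 0; have := hT 0; positivity
  calc (c - 1) * ∑ m ∈ range N, L m * Lam m ^ (-c) * T m ^ p
      ≤ ∑ m ∈ range N, (p * G m + (H (m + 1) - H m)) := by
        rw [mul_sum]; exact sum_le_sum fun m _ => hstep m
    _ = p * (∑ m ∈ range N, G m) + (H N - H 0) := by
        rw [sum_add_distrib, sum_range_sub, mul_sum]
    _ ≤ p * (∑ m ∈ range N, G m + ∑' k, G (k + N)) := by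
        simp only [hH_def] at hH0 ⊢; linarith
    _ = p * ∑' m, G m := by rw [hG.sum_add_tsum_nat_add]

end Recurrence

noncomputable def tailSum (f : ℕ → ℝ) (n : ℕ) : ℝ := ∑' k, f (k + n)

theorem tailSum_succ {f : ℕ → ℝ} (hf : Summable f) (n : ℕ) :
    tailSum f (n + 1) = tailSum f n - f n := by
  rw [tailSum, tailSum, ((summable_nat_add_iff n).2 hf).tsum_eq_zero_add]
  simp only [zero_add, ← add_assoc, Nat.add_right_comm _ 1 n, add_sub_cancel_left]

theorem tailSum_pos {f : ℕ → ℝ} (hf : Summable f) (hpos : ∀ n, 0 < f n) (n : ℕ) :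
    0 < tailSum f n :=
  ((summable_nat_add_iff n).2 hf).tsum_pos (fun _ => (hpos _).le) 0 (hpos _)

theorem sum_range_le_div_mul_tsum {p c : ℝ} (hc : 1 < c) (hcp : c ≤ p) {L X : ℕ → ℝ}
    (hL : ∀ n, 0 < L n) (hX : ∀ n, 0 < X n) (hLs : Summable L)
    (hLXs : Summable fun n => L n * X n)
    (hs : Summable fun n => L n * tailSum L n ^ (p - c) * X n *
      (tailSum (fun k => L k * X k) n / tailSum L n) ^ (p - 1)) (N : ℕ) :
    ∑ n ∈ range N, L n * tailSum L n ^ (p - c) *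
        (tailSum (fun k => L k * X k) n / tailSum L n) ^ p ≤
      p / (c - 1) * ∑' n, L n * tailSum L n ^ (p - c) * X n *
        (tailSum (fun k => L k * X k) n / tailSum L n) ^ (p - 1) := by
  set Lam := tailSum L
  set T := tailSum fun k => L k * X k
  have hLam := tailSum_pos hLs hL
  have hT := tailSum_pos hLXs fun n => mul_pos (hL n) (hX n)
  have hF (n : ℕ) :
      L n * Lam n ^ (p - c) * (T n / Lam n) ^ p = L n * Lam n ^ (-c) * T n ^ p := by
    rw [mul_assoc, rpow_mul_div_rpow (hLam n) (hT n).le, sub_sub_cancel_left, mul_assoc]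
  have hG (n : ℕ) : L n * Lam n ^ (p - c) * X n * (T n / Lam n) ^ (p - 1) =
      L n * X n * Lam n ^ (1 - c) * T n ^ (p - 1) := by
    rw [mul_right_comm _ _ (X n), mul_assoc, rpow_mul_div_rpow (hLam n) (hT n).le,
      show p - c - (p - 1) = 1 - c by ring]
    ring
  simp only [hF, hG] at hs ⊢
  rw [div_mul_eq_mul_div, le_div_iff₀ (by linarith), mul_comm]
  exact sub_one_mul_sum_range_le hc.le hcp hL hX hLam hT (tailSum_succ hLs) (tailSum_succ hLXs)
    (tendsto_sum_nat_add fun k => L k * X k) hs N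

theorem tsum_ofReal_le_ofReal_mul_tsum_ofReal {f g : ℕ → ℝ} {C : ℝ} (hf : ∀ n, 0 ≤ f n)
    (hg : ∀ n, 0 ≤ g n) (hgs : Summable g) (h : ∀ N, ∑ n ∈ range N, f n ≤ C * ∑' n, g n) :
    ∑' n, ENNReal.ofReal (f n) ≤ ENNReal.ofReal C * ∑' n, ENNReal.ofReal (g n) := by
  refine ENNReal.tsum_le_of_sum_range_le fun N => ?_
  rw [← ENNReal.ofReal_sum_of_nonneg fun n _ => hf n, ← ENNReal.ofReal_tsum_of_nonneg hg hgs,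
    ← ENNReal.ofReal_mul' (tsum_nonneg hg)]
  exact ENNReal.ofReal_le_ofReal (h N)

theorem stmt_8_general (p c : ℝ) (hc1 : 1 < c) (hcp : c ≤ p)
    (l x : ℕ → ℝ) (hl : ∀ n, 1 ≤ n → 0 < l n) (hx : ∀ n, 1 ≤ n → 0 < x n)
    (hlsum : Summable fun n : ℕ => l (n + 1))
    (Λs : ℕ → ℝ) (hΛs : ∀ n, 1 ≤ n → Λs n = ∑' k : ℕ, l (n + k))
    (hst : ∀ n, 1 ≤ n → Summable fun k : ℕ => l (n + k) * x (n + k))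
    (As : ℕ → ℝ) (hAs : ∀ n, 1 ≤ n → As n = (1 / Λs n) * ∑' k : ℕ, l (n + k) * x (n + k))
    (hs : Summable fun n : ℕ =>
      l (n + 1) * Λs (n + 1) ^ (p - c) * x (n + 1) * As (n + 1) ^ (p - 1)) :
    ∑' n : ℕ, ENNReal.ofReal (l (n + 1) * Λs (n + 1) ^ (p - c) * As (n + 1) ^ p)
      ≤ ENNReal.ofReal (p / (c - 1)) *
        ∑' n : ℕ, ENNReal.ofReal
          (l (n + 1) * Λs (n + 1) ^ (p - c) * x (n + 1) * As (n + 1) ^ (p - 1)) := by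
  set L : ℕ → ℝ := fun n => l (n + 1)
  set X : ℕ → ℝ := fun n => x (n + 1)
  have hL (n : ℕ) : 0 < L n := hl _ n.succ_pos
  have hX (n : ℕ) : 0 < X n := hx _ n.succ_pos
  have hLXs : Summable fun n => L n * X n :=
    (hst 1 le_rfl).congr fun n => by simp only [L, X, add_comm]
  have hΛ (n : ℕ) : Λs (n + 1) = tailSum L n := by
    rw [hΛs (n + 1) (by omega), tailSum]
    exact tsum_congr fun k => by simp only [L, show k + n + 1 = n + 1 + k by omega]
  have hA (n : ℕ) : As (n + 1) = tailSum (fun k => L k * X k) n / tailSum L n := by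
    rw [hAs (n + 1) (by omega), hΛ, one_div_mul_eq_div, tailSum]
    congr 1
    exact tsum_congr fun k => by simp only [L, X, show k + n + 1 = n + 1 + k by omega]
  have hΛ_pos := tailSum_pos hlsum hL
  have hT_pos := tailSum_pos hLXs fun n => mul_pos (hL n) (hX n)
  simp only [hΛ, hA] at hs ⊢
  refine tsum_ofReal_le_ofReal_mul_tsum_ofReal (fun n => ?_) (fun n => ?_) hs
    (sum_range_le_div_mul_tsum hc1 hcp hL hX hlsum hLXs hs)
  · have := hL n; have := hΛ_pos n; have := hT_pos n; positivity
  · have := hL n; have := hX n; have := hΛ_pos n; have := hT_pos n; positivity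

/-- inequality (1.11). -/
theorem stmt_8 (p c : ℝ) (hp : 1 < p) (hc1 : 1 < c) (hcp : c ≤ p)
    (l x : ℕ → ℝ) (hl : ∀ n, 1 ≤ n → 0 < l n) (hx : ∀ n, 1 ≤ n → 0 < x n)
    (hlsum : Summable fun n : ℕ => l (n + 1))
    (Λs : ℕ → ℝ) (hΛs : ∀ n, 1 ≤ n → Λs n = ∑' k : ℕ, l (n + k))
    (hst : ∀ n, 1 ≤ n → Summable fun k : ℕ => l (n + k) * x (n + k))
    (As : ℕ → ℝ) (hAs : ∀ n, 1 ≤ n → As n = (1 / Λs n) * ∑' k : ℕ, l (n + k) * x (n + k))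
    (hs : Summable fun n : ℕ =>
      l (n + 1) * Λs (n + 1) ^ (p - c) * x (n + 1) * As (n + 1) ^ (p - 1)) :
    ∑' n : ℕ, ENNReal.ofReal (l (n + 1) * Λs (n + 1) ^ (p - c) * As (n + 1) ^ p)
      ≤ ENNReal.ofReal (p / (c - 1)) *
        ∑' n : ℕ, ENNReal.ofReal
          (l (n + 1) * Λs (n + 1) ^ (p - c) * x (n + 1) * As (n + 1) ^ (p - 1)) :=
  stmt_8_general p c hc1 hcp l x hl hx hlsum Λs hΛs hst As hAs hs
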